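/- Higher-order Krawtchouk polynomials satisfy the reflection identity: for symmetric difference configurations g, h of ℓ-tuples in F_2^n, K_h(g)/|h| = K_g(h)/|g|, where |g| and |h| are the numbers of ℓ-tuples with configurations g and h respectively. -/
import Mathlib


open Finset

/-- Symmetric difference configuration. -/
def sdConfig (n ℓ : ℕ) (z : Fin ℓ → (Fin n → ZMod 2)) : Finset (Fin ℓ) → ℕ :=
  fun J => hammingNorm (∑ j ∈ J, z j)

/-- `(-1)^{⟨x,y⟩}` for `x, y ∈ 𝔽₂ⁿ`. -/
def chiPair {n : ℕ} (x y : Fin n → ZMod 2) : ℤ :=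
  (-1) ^ (univ.filter (fun i : Fin n => x i = 1 ∧ y i = 1)).card

/-- `∏_{j=1}^ℓ (-1)^{⟨x_j, y_j⟩}`. -/
def tupleChi {n ℓ : ℕ} (x y : Fin ℓ → (Fin n → ZMod 2)) : ℤ :=
  ∏ j : Fin ℓ, chiPair (x j) (y j)

/-- The higher-order Krawtchouk polynomial `K_h(g)`: the sum of `∏_j (-1)^{⟨x_j,y_j⟩}` over
all tuples `y` with configuration `h`, where `x` is any tuple with configuration `g`. -/
noncomputable def kraw (n ℓ : ℕ) (h g : Finset (Fin ℓ) → ℕ) : ℤ :=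
  if hg : ∃ x : Fin ℓ → (Fin n → ZMod 2), sdConfig n ℓ x = g then
    ∑ y ∈ univ.filter (fun y : Fin ℓ → (Fin n → ZMod 2) => sdConfig n ℓ y = h),
      tupleChi hg.choose y
  else 0



lemma zmod2_ne (u : ZMod 2) : u ≠ 0 ↔ u = 1 := by revert u; decide

lemma chiPair_eq_prod {m : ℕ} (a b : Fin m → ZMod 2) :
    chiPair a b = ∏ j : Fin m, (if a j = 1 ∧ b j = 1 then (-1 : ℤ) else 1) := by
  rw [chiPair, ← Finset.prod_const, Finset.prod_filter]

lemma chiPair_symm {m : ℕ} (a b : Fin m → ZMod 2) : chiPair a b = chiPair b a := by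
  unfold chiPair
  congr 1
  apply Finset.card_nbij id <;> simp [Set.MapsTo, Set.InjOn, Set.SurjOn, Set.subset_def] <;> tauto

lemma sum_chi_mul {m : ℕ} (p q : Fin m → ZMod 2) :
    ∑ a : Fin m → ZMod 2, chiPair a p * chiPair a q = if p = q then 2 ^ m else 0 := by
  have h1 : ∀ a : Fin m → ZMod 2, chiPair a p * chiPair a q =
      ∏ j : Fin m, ((if a j = 1 ∧ p j = 1 then (-1 : ℤ) else 1) *
        (if a j = 1 ∧ q j = 1 then (-1 : ℤ) else 1)) := by
    intro a
    rw [chiPair_eq_prod, chiPair_eq_prod, ← Finset.prod_mul_distrib]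
  simp only [h1]
  rw [← Fintype.prod_sum (fun j (t : ZMod 2) =>
    (if t = 1 ∧ p j = 1 then (-1 : ℤ) else 1) * (if t = 1 ∧ q j = 1 then (-1 : ℤ) else 1))]
  have h2 : ∀ j : Fin m, (∑ t : ZMod 2, (if t = 1 ∧ p j = 1 then (-1 : ℤ) else 1) *
      (if t = 1 ∧ q j = 1 then (-1 : ℤ) else 1)) = if p j = q j then 2 else 0 := by
    intro j
    have : ∀ u v : ZMod 2, (∑ t : ZMod 2, (if t = 1 ∧ u = 1 then (-1 : ℤ) else 1) *
        (if t = 1 ∧ v = 1 then (-1 : ℤ) else 1)) = if u = v then 2 else 0 := by decide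
    exact this (p j) (q j)
  simp only [h2]
  by_cases h : p = q
  · subst h; simp
  · obtain ⟨j, hj⟩ := Function.ne_iff.mp h
    rw [if_neg h]
    exact Finset.prod_eq_zero (Finset.mem_univ j) (by simp [hj])

def col {n ℓ : ℕ} (x : Fin ℓ → (Fin n → ZMod 2)) (i : Fin n) : Fin ℓ → ZMod 2 :=
  fun j => x j i

lemma chiPair_eq_if {m : ℕ} (a c : Fin m → ZMod 2) :
    chiPair a c = if (∑ j, a j * c j) = 1 then -1 else 1 := by
  have hcard : (∑ j, a j * c j) =
      ((univ.filter (fun j : Fin m => a j = 1 ∧ c j = 1)).card : ZMod 2) := by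
    have : ∀ j, a j * c j = if a j = 1 ∧ c j = 1 then (1 : ZMod 2) else 0 := by
      intro j
      have : ∀ u v : ZMod 2, u * v = if u = 1 ∧ v = 1 then (1 : ZMod 2) else 0 := by decide
      exact this _ _
    simp only [this]
    rw [Finset.sum_boole]
  set k := (univ.filter (fun j : Fin m => a j = 1 ∧ c j = 1)).card with hk
  have hiff : ((k : ZMod 2) = 1) ↔ Odd k := by
    rw [← ZMod.natCast_mod k 2, Nat.odd_iff]
    rcases Nat.mod_two_eq_zero_or_one k with h | h <;> rw [h] <;> decide
  rw [chiPair, ← hk, hcard]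
  by_cases h : Odd k
  · rw [if_pos (hiff.mpr h), h.neg_one_pow]
  · rw [if_neg (fun hc => h (hiff.mp hc)), (Nat.not_odd_iff_even.mp h).neg_one_pow]

lemma sum_col_apply {n ℓ : ℕ} (x : Fin ℓ → (Fin n → ZMod 2)) (a : Fin ℓ → ZMod 2) (i : Fin n) :
    (∑ j ∈ univ.filter (fun j => a j = 1), x j) i = ∑ j, a j * col x i j := by
  rw [Finset.sum_apply]
  rw [Finset.sum_filter]
  congr 1; ext j
  have : ∀ u v : ZMod 2, (if u = 1 then v else 0) = u * v := by decide
  exact this _ _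

lemma sum_chiPair_col {n ℓ : ℕ} (x : Fin ℓ → (Fin n → ZMod 2)) (a : Fin ℓ → ZMod 2) :
    ∑ i : Fin n, chiPair a (col x i) =
      (n : ℤ) - 2 * (sdConfig n ℓ x (univ.filter (fun j => a j = 1)) : ℤ) := by
  have h1 : ∀ i, chiPair a (col x i) =
      1 - 2 * (if (∑ j ∈ univ.filter (fun j => a j = 1), x j) i = 1 then (1:ℤ) else 0) := by
    intro i
    rw [chiPair_eq_if, sum_col_apply x a i]
    split <;> ring
  simp only [h1]
  rw [Finset.sum_sub_distrib, ← Finset.mul_sum, Finset.sum_boole]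
  have h2 : (univ.filter fun i => (∑ j ∈ univ.filter (fun j => a j = 1), x j) i = 1) =
      (univ.filter fun i => (∑ j ∈ univ.filter (fun j => a j = 1), x j) i ≠ 0) := by
    ext i; simp [zmod2_ne]
  rw [h2]
  simp [sdConfig, hammingNorm, Finset.filter]

lemma col_count_eq {n ℓ : ℕ} {x x' : Fin ℓ → (Fin n → ZMod 2)}
    (hxx' : sdConfig n ℓ x = sdConfig n ℓ x') (p : Fin ℓ → ZMod 2) :
    (univ.filter (fun i => col x i = p)).card = (univ.filter (fun i => col x' i = p)).card := by
  have hA : ∀ a : Fin ℓ → ZMod 2,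
      ∑ i : Fin n, chiPair a (col x i) = ∑ i : Fin n, chiPair a (col x' i) := by
    intro a
    rw [sum_chiPair_col, sum_chiPair_col, hxx']
  have key : ∀ w : Fin ℓ → (Fin n → ZMod 2),
      ∑ a : Fin ℓ → ZMod 2, chiPair a p * ∑ i : Fin n, chiPair a (col w i) =
        2 ^ ℓ * ((univ.filter (fun i => col w i = p)).card : ℤ) := by
    intro w
    simp only [Finset.mul_sum]
    rw [Finset.sum_comm]
    have : ∀ i : Fin n, ∑ a : Fin ℓ → ZMod 2, chiPair a p * chiPair a (col w i) =
        if col w i = p then 2 ^ ℓ else 0 := by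
      intro i
      rw [sum_chi_mul]
      by_cases h : p = col w i <;> simp [h, eq_comm]
    simp only [this]
    rw [Finset.sum_ite, Finset.sum_const, Finset.sum_const]
    simp [mul_comm]
  have hh : (2:ℤ) ^ ℓ * ((univ.filter (fun i => col x i = p)).card : ℤ) =
      2 ^ ℓ * ((univ.filter (fun i => col x' i = p)).card : ℤ) := by
    rw [← key x, ← key x']
    simp only [hA]
  have h2 : (2 : ℤ) ^ ℓ ≠ 0 := by positivity
  have := mul_left_cancel₀ h2 hh
  exact_mod_cast this

lemma exists_perm_col {n ℓ : ℕ} {x x' : Fin ℓ → (Fin n → ZMod 2)}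
    (hxx' : sdConfig n ℓ x = sdConfig n ℓ x') :
    ∃ σ : Equiv.Perm (Fin n), ∀ i, col x' i = col x (σ i) := by
  have e : ∀ p : Fin ℓ → ZMod 2, { i // col x' i = p } ≃ { i // col x i = p } := by
    intro p
    apply Fintype.equivOfCardEq
    rw [Fintype.card_subtype, Fintype.card_subtype]
    exact (col_count_eq hxx' p).symm
  exact ⟨Equiv.ofFiberEquiv e, fun i => (Equiv.ofFiberEquiv_map e i).symm⟩

lemma card_filter_comp {n : ℕ} (σ : Equiv.Perm (Fin n)) (P : Fin n → Prop) [DecidablePred P] :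
    (univ.filter (fun i => P (σ i))).card = (univ.filter P).card := by
  apply Finset.card_bij (fun i _ => σ i)
  · intro a ha; simp only [Finset.mem_filter, Finset.mem_univ, true_and] at *; exact ha
  · intro a _ b _ hab; exact σ.injective hab
  · intro b hb
    refine ⟨σ.symm b, ?_, by simp⟩
    simp only [Finset.mem_filter, Finset.mem_univ, true_and, Equiv.apply_symm_apply] at *
    exact hb

lemma chiPair_comp {n : ℕ} (σ : Equiv.Perm (Fin n)) (a b : Fin n → ZMod 2) :
    chiPair (fun i => a (σ i)) (fun i => b (σ i)) = chiPair a b := by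
  unfold chiPair
  rw [card_filter_comp σ (fun i => a i = 1 ∧ b i = 1)]

lemma sdConfig_comp {n ℓ : ℕ} (σ : Equiv.Perm (Fin n)) (y : Fin ℓ → (Fin n → ZMod 2)) :
    sdConfig n ℓ (fun j i => y j (σ i)) = sdConfig n ℓ y := by
  funext J
  unfold sdConfig hammingNorm
  have : ∀ i, (∑ j ∈ J, (fun j i => y j (σ i)) j) i = (∑ j ∈ J, y j) (σ i) := by
    intro i; rw [Finset.sum_apply, Finset.sum_apply]
  simp only [this]
  exact card_filter_comp σ (fun i => (∑ j ∈ J, y j) i ≠ 0)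

lemma sum_tupleChi_eq {n ℓ : ℕ} (h : Finset (Fin ℓ) → ℕ) {x x' : Fin ℓ → (Fin n → ZMod 2)}
    (σ : Equiv.Perm (Fin n)) (hσ : ∀ j i, x' j i = x j (σ i)) :
    ∑ y ∈ univ.filter (fun y : Fin ℓ → (Fin n → ZMod 2) => sdConfig n ℓ y = h), tupleChi x' y =
      ∑ y ∈ univ.filter (fun y : Fin ℓ → (Fin n → ZMod 2) => sdConfig n ℓ y = h),
        tupleChi x y := by
  refine Finset.sum_equiv
    ⟨fun y => fun j i => y j (σ.symm i), fun y => fun j i => y j (σ i),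
      fun y => by funext j i; simp, fun y => by funext j i; simp⟩
    (fun y => ?_) (fun y hy => ?_)
  · simp only [Finset.mem_filter, Finset.mem_univ, true_and, Equiv.coe_fn_mk]
    rw [sdConfig_comp σ.symm y]
  · simp only [Equiv.coe_fn_mk]
    unfold tupleChi
    apply Finset.prod_congr rfl
    intro j _
    have : chiPair (x' j) (y j) =
        chiPair (fun i => x j (σ i)) (fun i => (fun i' => y j (σ.symm i')) (σ i)) := by
      congr 1
      · funext i; exact hσ j i
      · funext i; simp
    rw [this, chiPair_comp σ (x j) (fun i' => y j (σ.symm i'))]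

lemma kraw_eq (n ℓ : ℕ) (h : Finset (Fin ℓ) → ℕ) (z : Fin ℓ → (Fin n → ZMod 2)) :
    kraw n ℓ h (sdConfig n ℓ z) =
      ∑ y ∈ univ.filter (fun y : Fin ℓ → (Fin n → ZMod 2) => sdConfig n ℓ y = h),
        tupleChi z y := by
  have hg : ∃ x : Fin ℓ → (Fin n → ZMod 2), sdConfig n ℓ x = sdConfig n ℓ z := ⟨z, rfl⟩
  rw [kraw, dif_pos hg]
  obtain ⟨σ, hσ⟩ := exists_perm_col (hg.choose_spec : sdConfig n ℓ hg.choose = sdConfig n ℓ z).symm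
  exact sum_tupleChi_eq h σ (fun j i => congrFun (hσ i) j)

lemma tupleChi_symm {n ℓ : ℕ} (x y : Fin ℓ → (Fin n → ZMod 2)) : tupleChi x y = tupleChi y x := by
  unfold tupleChi
  exact Finset.prod_congr rfl (fun j _ => chiPair_symm _ _)

lemma kraw_double (n ℓ : ℕ) (z z' : Fin ℓ → (Fin n → ZMod 2)) :
    ((univ.filter (fun y : Fin ℓ → (Fin n → ZMod 2) => sdConfig n ℓ y = sdConfig n ℓ z)).card : ℤ)
        * kraw n ℓ (sdConfig n ℓ z') (sdConfig n ℓ z) =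
      ((univ.filter
          (fun y : Fin ℓ → (Fin n → ZMod 2) => sdConfig n ℓ y = sdConfig n ℓ z')).card : ℤ)
        * kraw n ℓ (sdConfig n ℓ z) (sdConfig n ℓ z') := by
  have lhs : ∑ x ∈ univ.filter
        (fun y : Fin ℓ → (Fin n → ZMod 2) => sdConfig n ℓ y = sdConfig n ℓ z),
      ∑ y ∈ univ.filter
        (fun y : Fin ℓ → (Fin n → ZMod 2) => sdConfig n ℓ y = sdConfig n ℓ z'),
      tupleChi x y =
      ((univ.filter
          (fun y : Fin ℓ → (Fin n → ZMod 2) => sdConfig n ℓ y = sdConfig n ℓ z)).card : ℤ)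
        * kraw n ℓ (sdConfig n ℓ z') (sdConfig n ℓ z) := by
    rw [Finset.sum_congr rfl (fun x hx => ?_), Finset.sum_const, nsmul_eq_mul]
    have hx2 : sdConfig n ℓ x = sdConfig n ℓ z := (Finset.mem_filter.mp hx).2
    rw [← hx2, kraw_eq]
  have rhs : ∑ y ∈ univ.filter
        (fun y : Fin ℓ → (Fin n → ZMod 2) => sdConfig n ℓ y = sdConfig n ℓ z'),
      ∑ x ∈ univ.filter
        (fun y : Fin ℓ → (Fin n → ZMod 2) => sdConfig n ℓ y = sdConfig n ℓ z),
      tupleChi x y =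
      ((univ.filter
          (fun y : Fin ℓ → (Fin n → ZMod 2) => sdConfig n ℓ y = sdConfig n ℓ z')).card : ℤ)
        * kraw n ℓ (sdConfig n ℓ z) (sdConfig n ℓ z') := by
    rw [Finset.sum_congr rfl (fun y hy => ?_), Finset.sum_const, nsmul_eq_mul]
    have hy2 : sdConfig n ℓ y = sdConfig n ℓ z' := (Finset.mem_filter.mp hy).2
    rw [Finset.sum_congr rfl (fun x _ => tupleChi_symm x y), ← hy2, kraw_eq]
  rw [← lhs, ← rhs, Finset.sum_comm]

/-- Reflection identity for higher-order Krawtchouk polynomials: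
`K_h(g)/|h| = K_g(h)/|g|`, where `|g|`, `|h|` are the numbers of `ℓ`-tuples with
configurations `g`, `h` respectively. Here `g` is the configuration of `z` and `h` is the
configuration of `z'`. -/
theorem kraw_reflection (n ℓ : ℕ) (z z' : Fin ℓ → (Fin n → ZMod 2)) :
    (kraw n ℓ (sdConfig n ℓ z') (sdConfig n ℓ z) : ℚ) /
        ((univ.filter
            (fun y : Fin ℓ → (Fin n → ZMod 2) => sdConfig n ℓ y = sdConfig n ℓ z')).card : ℚ) =
      (kraw n ℓ (sdConfig n ℓ z) (sdConfig n ℓ z') : ℚ) /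
        ((univ.filter
            (fun y : Fin ℓ → (Fin n → ZMod 2) => sdConfig n ℓ y = sdConfig n ℓ z)).card : ℚ) := by
  have hGpos : 0 < (univ.filter
      (fun y : Fin ℓ → (Fin n → ZMod 2) => sdConfig n ℓ y = sdConfig n ℓ z)).card :=
    Finset.card_pos.mpr ⟨z, by simp⟩
  have hHpos : 0 < (univ.filter
      (fun y : Fin ℓ → (Fin n → ZMod 2) => sdConfig n ℓ y = sdConfig n ℓ z')).card :=
    Finset.card_pos.mpr ⟨z', by simp⟩
  rw [div_eq_div_iff (by exact_mod_cast hHpos.ne') (by exact_mod_cast hGpos.ne')]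
  have := kraw_double n ℓ z z'
  exact_mod_cast by linarith [this]
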